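/- arXiv:1306.4030 — 2 statements merged into one kernel-verified Lean document; each statement's English description precedes it below -/
import Mathlib

section
/- Let X be a smooth projective curve of genus 2 over a field K of characteristic ≠ 2 with hyperelliptic involution ι and a fixed Weierstrass point o. Let p = [(p₁)+(p₂)−2(o)] be a non-zero point of J = Pic⁰(X) given by a reduced divisor, and suppose neither p₁ nor p₂ is a Weierstrass point (i.e., ι(pᵢ) ≠ pᵢ). Then Θ ∩ Θ_p ∩ Θ_{2p} = ∅, where Θ = {[(q)−(o)] : q ∈ X} ∪ {0} is the theta divisor and Θ_q its translate by q. -/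
/-! If `z ∈ Θ ∩ Θ_p ∩ Θ_{2p}`, write `z = [(a)-(o)] = [(b)-(o)] + p = [(c)-(o)] + 2p`. Since
`p = [(p₁)-(ι p₂)]`, Riemann–Roch applied to `[(a)-(b)] = p` and `[(b)-(c)] = p` forces
`b ∈ {ι p₁, ι p₂}` and `b ∈ {p₁, p₂}`; each of the four coincidences makes `p₁ + p₂` non-reduced or
one of the `pᵢ` a Weierstrass point. -/

section TranslateByReducedDivisor

variable {X J : Type*} [AddCommGroup J] {ι : X → X} {AJ : X → J}

theorem eq_and_eq_or_eq_and_eq_of_AJ_add_eq (hinv : ∀ q, ι (ι q) = q)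
    (hAJι : ∀ q, AJ q + AJ (ι q) = 0)
    (hrr : ∀ r q r' q' : X, AJ r - AJ q = AJ r' - AJ q' → AJ r ≠ AJ q →
      (r = r' ∧ q = q') ∨ (r = ι q' ∧ q = ι r'))
    {p₁ p₂ a b : X} (hp0 : AJ p₁ + AJ p₂ ≠ 0) (h : AJ b + (AJ p₁ + AJ p₂) = AJ a) :
    (a = p₁ ∧ b = ι p₂) ∨ (a = p₂ ∧ b = ι p₁) := by
  have hsub : AJ a - AJ b = AJ p₁ - AJ (ι p₂) := by
    rw [eq_neg_of_add_eq_zero_right (hAJι p₂), ← h]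
    abel
  have hab : AJ a ≠ AJ b := fun hab => hp0 (add_eq_left.mp (h.trans hab))
  simpa only [hinv] using hrr a b p₁ (ι p₂) hsub hab

end TranslateByReducedDivisor

theorem stmt_11_general {X J : Type*} [AddCommGroup J]
    (ι : X → X) (AJ : X → J) (Θ : Set J)
    (hinv : ∀ q, ι (ι q) = q)
    (hAJι : ∀ q, AJ q + AJ (ι q) = 0)
    (hrr : ∀ r q r' q' : X, AJ r - AJ q = AJ r' - AJ q' → AJ r ≠ AJ q →
      (r = r' ∧ q = q') ∨ (r = ι q' ∧ q = ι r'))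
    (hΘ : Θ = Set.range AJ)
    (p₁ p₂ : X) (p : J) (hp : p = AJ p₁ + AJ p₂) (hp0 : p ≠ 0)
    (hred : p₁ ≠ ι p₂)
    (hW1 : ι p₁ ≠ p₁) (hW2 : ι p₂ ≠ p₂) :
    Θ ∩ ((fun x => x + p) '' Θ) ∩ ((fun x => x + 2 • p) '' Θ) = ∅ := by
  subst hΘ hp
  refine Set.eq_empty_iff_forall_notMem.mpr ?_
  rintro _ ⟨⟨⟨a, rfl⟩, _, ⟨b, rfl⟩, hba⟩, _, ⟨c, rfl⟩, hca⟩
  beta_reduce at hba hca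
  have hcb : AJ c + (AJ p₁ + AJ p₂) = AJ b :=
    add_right_cancel (b := AJ p₁ + AJ p₂) (by rw [hba, add_assoc, ← two_smul ℕ, hca])
  have hb_below := eq_and_eq_or_eq_and_eq_of_AJ_add_eq hinv hAJι hrr hp0 hba
  have hb_above := eq_and_eq_or_eq_and_eq_of_AJ_add_eq hinv hAJι hrr hp0 hcb
  rcases hb_below with ⟨-, rfl⟩ | ⟨-, rfl⟩ <;> rcases hb_above with ⟨h, -⟩ | ⟨h, -⟩
  · exact hred h.symm
  · exact hW2 h
  · exact hW1 h
  · exact hred (by rw [← h, hinv])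

/-- Lemma 7.1 (ii), for the Jacobian of a genus 2 curve, axiomatized via:
`X` the set of curve points, `ι` the hyperelliptic involution, `o` the marked
Weierstrass point, `J` the Jacobian, `AJ : X → J` the Abel–Jacobi map
`q ↦ [(q)-(o)]`, `Θ = AJ(X)` the theta divisor, with the relation
`[(q)+(ι q)-2(o)] = 0`, injectivity of `AJ`, the Riemann–Roch uniqueness of
reduced representatives of nonzero degree-zero classes `[(r)-(q)]`, and
surjectivity of `X⁽²⁾ → J`. If `p = [(p₁)+(p₂)-2(o)]` is non-zero, given by a
reduced divisor, and neither `p₁` nor `p₂` is a Weierstrass point, then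
`Θ ∩ Θ_p ∩ Θ_{2p} = ∅`, where `Θ_s = Θ + s`. -/
theorem stmt_11 {X J : Type*} [AddCommGroup J]
    (ι : X → X) (o : X) (AJ : X → J) (Θ : Set J)
    (hinv : ∀ q, ι (ι q) = q) (hιo : ι o = o)
    (hAJo : AJ o = 0) (hAJι : ∀ q, AJ q + AJ (ι q) = 0)
    (hinj : Function.Injective AJ)
    (hrr : ∀ r q r' q' : X, AJ r - AJ q = AJ r' - AJ q' → AJ r ≠ AJ q →
      (r = r' ∧ q = q') ∨ (r = ι q' ∧ q = ι r'))
    (hsurj : ∀ s : J, ∃ a b : X, s = AJ a + AJ b)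
    (hΘ : Θ = Set.range AJ)
    (p₁ p₂ : X) (p : J) (hp : p = AJ p₁ + AJ p₂) (hp0 : p ≠ 0)
    (hred : p₁ ≠ ι p₂)
    (hW1 : ι p₁ ≠ p₁) (hW2 : ι p₂ ≠ p₂) :
    Θ ∩ ((fun x => x + p) '' Θ) ∩ ((fun x => x + 2 • p) '' Θ) = ∅ :=
  stmt_11_general ι AJ Θ hinv hAJι hrr hΘ p₁ p₂ p hp hp0 hred hW1 hW2
end

section
/- Let X be a smooth projective curve of genus 2 over a field K of characteristic ≠ 2 with a fixed Weierstrass point o, J = Pic⁰(X), and Θ the theta divisor with respect to o. For every point p ∈ J with p ∉ J[2], the intersection Θ ∩ Θ_p ∩ Θ_{2p} ∩ Θ_{3p} is empty. -/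
/-!
A point of `Θ ∩ Θ_p ∩ Θ_{2p} ∩ Θ_{3p}` is `AJ a = AJ b + p = AJ c + 2p = AJ d + 3p`, so the classes
`[(a)-(b)]`, `[(b)-(c)]`, `[(c)-(d)]` all equal `p ≠ 0`. By Riemann–Roch a nonzero class `[(r)-(q)]`
has a unique reduced representative up to the hyperelliptic symmetry `(r)-(q) ~ (ι q)-(ι r)`, so
`[(a)-(b)] = [(b)-(c)]` forces `b = ι b`: `b` is a Weierstrass point and `2 • AJ b = 0`. Likewise
`2 • AJ c = 0`, hence `2 • p = 2 • (AJ b - AJ c) = 0`.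
-/

section

variable {X J : Type*} [AddCommGroup J] {ι : X → X} {AJ : X → J}

theorem two_nsmul_eq_zero_of_sub_eq_sub (hAJι : ∀ q, AJ q + AJ (ι q) = 0)
    (hrr : ∀ r q r' q' : X, AJ r - AJ q = AJ r' - AJ q' → AJ r ≠ AJ q →
      (r = r' ∧ q = q') ∨ (r = ι q' ∧ q = ι r'))
    {a b c : X} (h : AJ a - AJ b = AJ b - AJ c) (hab : AJ a ≠ AJ b) :
    2 • AJ b = 0 := by
  rcases hrr a b b c h hab with ⟨rfl, -⟩ | ⟨-, hb⟩
  · exact absurd rfl hab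
  · calc 2 • AJ b = AJ b + AJ (ι b) := by rw [two_nsmul, ← hb]
      _ = 0 := hAJι b

theorem two_nsmul_eq_zero_of_sub_eq_of_sub_eq_of_sub_eq (hAJι : ∀ q, AJ q + AJ (ι q) = 0)
    (hrr : ∀ r q r' q' : X, AJ r - AJ q = AJ r' - AJ q' → AJ r ≠ AJ q →
      (r = r' ∧ q = q') ∨ (r = ι q' ∧ q = ι r'))
    {a b c d : X} {p : J} (hab : AJ a - AJ b = p) (hbc : AJ b - AJ c = p)
    (hcd : AJ c - AJ d = p) (hp : p ≠ 0) :
    2 • p = 0 := by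
  have hb := two_nsmul_eq_zero_of_sub_eq_sub hAJι hrr (hab.trans hbc.symm)
    (fun h ↦ hp (by rw [← hab, h, sub_self]))
  have hc := two_nsmul_eq_zero_of_sub_eq_sub hAJι hrr (hbc.trans hcd.symm)
    (fun h ↦ hp (by rw [← hbc, h, sub_self]))
  rw [← hbc, smul_sub, hb, hc, sub_self]

end

/-- The curve is modelled by its set of points `X`, the Jacobian `J`, the hyperelliptic involution `ι`
and the Abel–Jacobi map `AJ q = [(q)-(o)]`; `hAJι` is `[(q)+(ι q)-2(o)] = 0` and `hrr` is the
Riemann–Roch uniqueness of reduced representatives of nonzero classes `[(r)-(q)]`. -/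
theorem stmt_12_general {X J : Type*} [AddCommGroup J]
    (ι : X → X) (AJ : X → J) (Θ : Set J)
    (hAJι : ∀ q, AJ q + AJ (ι q) = 0)
    (hrr : ∀ r q r' q' : X, AJ r - AJ q = AJ r' - AJ q' → AJ r ≠ AJ q →
      (r = r' ∧ q = q') ∨ (r = ι q' ∧ q = ι r'))
    (hΘ : Θ = Set.range AJ)
    (p : J) (hp2 : 2 • p ≠ 0) :
    Θ ∩ ((fun x => x + p) '' Θ) ∩ ((fun x => x + 2 • p) '' Θ) ∩
      ((fun x => x + 3 • p) '' Θ) = ∅ := by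
  subst hΘ
  refine Set.eq_empty_of_forall_notMem ?_
  rintro _ ⟨⟨⟨⟨a, rfl⟩, _, ⟨b, rfl⟩, hb⟩, _, ⟨c, rfl⟩, hc⟩, _, ⟨d, rfl⟩, hd⟩
  have hp : p ≠ 0 := by
    rintro rfl
    exact hp2 (smul_zero 2)
  beta_reduce at hb hc hd
  have hab : AJ a - AJ b = p := by linear_combination (norm := module) -hb
  have hbc : AJ b - AJ c = p := by linear_combination (norm := module) hb - hc
  have hcd : AJ c - AJ d = p := by linear_combination (norm := module) hc - hd
  exact hp2 (two_nsmul_eq_zero_of_sub_eq_of_sub_eq_of_sub_eq hAJι hrr hab hbc hcd hp)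

/-- Lemma 7.1 (iii), for the Jacobian of a genus 2 curve, axiomatized via:
`X` the set of curve points, `ι` the hyperelliptic involution, `o` the marked
Weierstrass point, `J` the Jacobian, `AJ : X → J` the Abel–Jacobi map
`q ↦ [(q)-(o)]`, `Θ = AJ(X)` the theta divisor, with the relation
`[(q)+(ι q)-2(o)] = 0`, injectivity of `AJ`, the Riemann–Roch uniqueness of
reduced representatives of nonzero degree-zero classes `[(r)-(q)]`, and
surjectivity of `X⁽²⁾ → J`. For every `p ∈ J` not in `J[2]`, the intersection
`Θ ∩ Θ_p ∩ Θ_{2p} ∩ Θ_{3p}` is empty, where `Θ_s = Θ + s`. -/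
theorem stmt_12 {X J : Type*} [AddCommGroup J]
    (ι : X → X) (o : X) (AJ : X → J) (Θ : Set J)
    (hinv : ∀ q, ι (ι q) = q) (hιo : ι o = o)
    (hAJo : AJ o = 0) (hAJι : ∀ q, AJ q + AJ (ι q) = 0)
    (hinj : Function.Injective AJ)
    (hrr : ∀ r q r' q' : X, AJ r - AJ q = AJ r' - AJ q' → AJ r ≠ AJ q →
      (r = r' ∧ q = q') ∨ (r = ι q' ∧ q = ι r'))
    (hsurj : ∀ s : J, ∃ a b : X, s = AJ a + AJ b)
    (hΘ : Θ = Set.range AJ)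
    (p : J) (hp2 : 2 • p ≠ 0) :
    Θ ∩ ((fun x => x + p) '' Θ) ∩ ((fun x => x + 2 • p) '' Θ) ∩
      ((fun x => x + 3 • p) '' Θ) = ∅ :=
  stmt_12_general ι AJ Θ hAJι hrr hΘ p hp2
end
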